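/- Consider the generalized fair learning problem: minimize E_{(x,s)∼P_{X,S}}[ TV(Q_{Ŷ|X=x,S=s}, P_{Y|X=x,S=s}) ] over conditional distributions Q_{Ŷ|X,S} subject to ρ_m(Ŷ, S) ≤ ε, where Ŷ is distributed according to Q_{Ŷ|X,S} · P_{X,S} and ρ_m is the maximal correlation. Suppose there exists φ : 𝒳 × 𝒴 → ℝ such that P(X=x | Y=y, S=s) / P(X=x | S=s) = φ(x, y) for all x ∈ 𝒳, y ∈ 𝒴, s ∈ 𝒮, and s_max ∈ 𝒮 satisfies P_S(s_max) = 1/2 + δ for some δ > 0. Let r = min{|𝒮|, |𝒴|} − 1 and u(t) = max{t, √t}. Then for any optimal solution Q*, the induced Ŷ satisfies: E_{s∼P_S}[ TV(P_{Ŷ|S=s}, P_{Y|S=s_max}) ] ≤ (1/2 + 1/(4δ)) · u(rε). -/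

import Mathlib

/-!
The Bayes rule of the majority group, `x ↦ P_{Y|X=x,S=s_max}`, is admissible: under the
inductive bias its prediction is independent of `S`, so its maximal correlation vanishes.
Optimality of `Q` against it, with the convexity of `TV`, gives
`E_s TV(P_{Ŷ|s}, P_{Y|s}) ≤ E_s TV(P_{Y|s_max}, P_{Y|s})`; as `s_max` carries weight `1/2 + δ`,
the triangle inequality turns this into a bound on `E_s TV(P_{Ŷ|s}, P_{Y|s_max})` by
`(1 + 1/(2δ)) E_s TV(P_{Ŷ|s}, P_Ŷ)`. The fairness constraint controls this spread: testing the
maximal correlation against the indicator of one value and the sign of the deviation from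
independence bounds each column by `ρ_m √(p(1 - p))`, and Cauchy–Schwarz sums these bounds
to `ρ_m √r ≤ u(rε)`.
-/

open Finset

noncomputable section

variable {𝒳 𝒴 𝒮 : Type*} [Fintype 𝒳] [Fintype 𝒴] [Fintype 𝒮]

/-- Total variation distance between two finitely supported distributions on `𝒴`,
`TV(p, q) = (1/2) ∑ y, |p y - q y|`. -/
def TV (p q : 𝒴 → ℝ) : ℝ := (1 / 2) * ∑ y, |p y - q y|

/-- Marginal distribution of `(X, S)` under the joint `P` of `(X, Y, S)`. -/
def margXS (P : 𝒳 → 𝒴 → 𝒮 → ℝ) (x : 𝒳) (s : 𝒮) : ℝ := ∑ y, P x y s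

/-- Marginal distribution of `(Y, S)`. -/
def margYS (P : 𝒳 → 𝒴 → 𝒮 → ℝ) (y : 𝒴) (s : 𝒮) : ℝ := ∑ x, P x y s

/-- Marginal distribution of `S`. -/
def margS (P : 𝒳 → 𝒴 → 𝒮 → ℝ) (s : 𝒮) : ℝ := ∑ x, margXS P x s

/-- Marginal distribution of `X`. -/
def margX (P : 𝒳 → 𝒴 → 𝒮 → ℝ) (x : 𝒳) : ℝ := ∑ s, margXS P x s

/-- Conditional distribution of `Y` given `X = x, S = s`. -/
def condYXS (P : 𝒳 → 𝒴 → 𝒮 → ℝ) (x : 𝒳) (s : 𝒮) (y : 𝒴) : ℝ := P x y s / margXS P x s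

/-- Conditional distribution of `Y` given `S = s`. -/
def condYS (P : 𝒳 → 𝒴 → 𝒮 → ℝ) (s : 𝒮) (y : 𝒴) : ℝ := margYS P y s / margS P s

/-- The ratio `P(X=x | Y=y, S=s) / P(X=x | S=s)`. -/
def condRatio (P : 𝒳 → 𝒴 → 𝒮 → ℝ) (x : 𝒳) (y : 𝒴) (s : 𝒮) : ℝ :=
  (P x y s / margYS P y s) / (margXS P x s / margS P s)

/-- A conditional distribution `Q`: for every `(x, s)`, `Q x s` is a probability
distribution on labels. -/
def IsRule (Q : 𝒳 → 𝒮 → 𝒴 → ℝ) : Prop :=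
  (∀ x s y, 0 ≤ Q x s y) ∧ ∀ x s, ∑ y, Q x s y = 1

/-- The generalized objective: `E_{(x,s)∼P_{X,S}}[TV(Q_{Ŷ|X=x,S=s}, P_{Y|X=x,S=s})]`. -/
def objective (P : 𝒳 → 𝒴 → 𝒮 → ℝ) (Q : 𝒳 → 𝒮 → 𝒴 → ℝ) : ℝ :=
  ∑ x, ∑ s, margXS P x s * TV (Q x s) (condYXS P x s)

/-- Joint distribution of `(Ŷ, S)` induced by `Q · P_{X,S}`. -/
def jointYhatS (P : 𝒳 → 𝒴 → 𝒮 → ℝ) (Q : 𝒳 → 𝒮 → 𝒴 → ℝ) (yh : 𝒴) (s : 𝒮) : ℝ :=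
  ∑ x, margXS P x s * Q x s yh

/-- Marginal distribution of the prediction `Ŷ`. -/
def margYhat (P : 𝒳 → 𝒴 → 𝒮 → ℝ) (Q : 𝒳 → 𝒮 → 𝒴 → ℝ) (yh : 𝒴) : ℝ :=
  ∑ s, jointYhatS P Q yh s

/-- Conditional distribution of the prediction `Ŷ` given `S = s`. -/
def condYhatS (P : 𝒳 → 𝒴 → 𝒮 → ℝ) (Q : 𝒳 → 𝒮 → 𝒴 → ℝ) (s : 𝒮) (yh : 𝒴) : ℝ :=
  jointYhatS P Q yh s / margS P s

/-- Hirschfeld–Gebelein–Rényi maximal correlation between the prediction `Ŷ` and `S`. -/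
def maxCorr (P : 𝒳 → 𝒴 → 𝒮 → ℝ) (Q : 𝒳 → 𝒮 → 𝒴 → ℝ) : ℝ :=
  sSup { c : ℝ | ∃ f : 𝒴 → ℝ, ∃ g : 𝒮 → ℝ,
    (∑ yh, margYhat P Q yh * f yh = 0) ∧ (∑ s, margS P s * g s = 0) ∧
    (∑ yh, margYhat P Q yh * f yh ^ 2 = 1) ∧ (∑ s, margS P s * g s ^ 2 = 1) ∧
    c = ∑ yh, ∑ s, jointYhatS P Q yh s * f yh * g s }

lemma mul_sqrt_le_max_mul_sqrt {ρ ε r : ℝ} (hρ0 : 0 ≤ ρ) (hρ1 : ρ ≤ 1) (hρε : ρ ≤ ε) :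
    ρ * √r ≤ max (r * ε) √(r * ε) := by
  refine le_max_of_le_right ?_
  rcases le_or_gt r 0 with hr | hr
  · rw [Real.sqrt_eq_zero_of_nonpos hr, mul_zero]
    exact Real.sqrt_nonneg _
  calc ρ * √r = √(r * ρ ^ 2) := by rw [Real.sqrt_mul hr.le, Real.sqrt_sq hρ0, mul_comm]
    _ ≤ √(r * ε) := Real.sqrt_le_sqrt (mul_le_mul_of_nonneg_left (by nlinarith) hr.le)

section TotalVariation

variable (p q r : 𝒴 → ℝ)

lemma TV_comm : TV p q = TV q p := by
  simp only [TV, abs_sub_comm]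

lemma TV_self : TV p p = 0 := by
  simp [TV]

lemma TV_triangle : TV p r ≤ TV p q + TV q r := by
  unfold TV
  rw [← mul_add, ← sum_add_distrib]
  gcongr with y
  exact abs_sub_le _ _ _

lemma mul_TV {c : ℝ} (hc : 0 ≤ c) : c * TV p q = TV (fun y => c * p y) (fun y => c * q y) := by
  simp only [TV, ← mul_sub, abs_mul, abs_of_nonneg hc, ← mul_sum]
  ring

lemma TV_sum_le {ι : Type*} [Fintype ι] (w : ι → ℝ) (hw : ∀ i, 0 ≤ w i) (p q : ι → 𝒴 → ℝ) :
    TV (fun y => ∑ i, w i * p i y) (fun y => ∑ i, w i * q i y) ≤ ∑ i, w i * TV (p i) (q i) := by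
  simp only [mul_TV _ _ (hw _)]
  unfold TV
  rw [← mul_sum, sum_comm]
  gcongr with y
  simpa only [← sum_sub_distrib] using abs_sum_le_sum_abs _ _

lemma sum_mul_TV_le_of_majority {ι : Type*} [Fintype ι] (p : ι → ℝ) (hp : ∀ i, 0 ≤ p i)
    (hp1 : ∑ i, p i = 1) {i₀ : ι} {δ : ℝ} (hδ : 0 < δ) (hi₀ : p i₀ = 1 / 2 + δ)
    (μ ν : ι → 𝒴 → ℝ) (m : 𝒴 → ℝ)
    (h : ∑ i, p i * TV (μ i) (ν i) ≤ ∑ i, p i * TV (ν i₀) (ν i)) :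
    ∑ i, p i * TV (μ i) (ν i₀) ≤ (1 + 1 / (2 * δ)) * ∑ i, p i * TV (μ i) m := by
  classical
  set T := TV (μ i₀) (ν i₀)
  set W := TV (μ i₀) m
  have split : ∀ f : ι → ℝ, ∑ i, f i = f i₀ + ∑ i ∈ univ.erase i₀, f i :=
    fun f => (add_sum_erase _ _ (mem_univ i₀)).symm
  have hrest : ∑ i ∈ univ.erase i₀, p i = 1 - p i₀ := by linarith [split p]
  have hT : p i₀ * T ≤ ∑ i ∈ univ.erase i₀, p i * TV (μ i) (ν i₀) := by
    have hsplit := h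
    rw [split, split (fun i => p i * TV (ν i₀) (ν i)), TV_self, mul_zero, zero_add] at hsplit
    have htri : ∑ i ∈ univ.erase i₀, p i * TV (ν i₀) (ν i)
        ≤ ∑ i ∈ univ.erase i₀, (p i * TV (μ i) (ν i₀) + p i * TV (μ i) (ν i)) :=
      sum_le_sum fun i _ => by
        rw [← mul_add, TV_comm (μ i)]
        exact mul_le_mul_of_nonneg_left (TV_triangle _ _ _) (hp i)
    rw [sum_add_distrib] at htri
    linarith
  have htri : ∀ i, p i * TV (μ i) (ν i₀) ≤ p i * TV (μ i) m + p i * (W + T) := fun i => by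
    rw [← mul_add]
    refine mul_le_mul_of_nonneg_left ?_ (hp i)
    calc TV (μ i) (ν i₀) ≤ TV (μ i) m + (TV m (μ i₀) + T) :=
          (TV_triangle _ m _).trans (by gcongr; exact TV_triangle _ _ _)
      _ = TV (μ i) m + (W + T) := by rw [TV_comm m]
  have hall := sum_le_sum fun i (_ : i ∈ univ) => htri i
  have hmost := sum_le_sum fun i (_ : i ∈ univ.erase i₀) => htri i
  rw [sum_add_distrib, ← sum_mul, hp1, one_mul] at hall
  rw [sum_add_distrib, ← sum_mul, hrest] at hmost
  have hB : ∑ i, p i * TV (μ i) m = p i₀ * W + ∑ i ∈ univ.erase i₀, p i * TV (μ i) m :=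
    split _
  rw [hi₀] at hT hmost hB
  have hWT : 2 * δ * (W + T) ≤ ∑ i, p i * TV (μ i) m := by linarith
  calc _ ≤ ∑ i, p i * TV (μ i) m + (W + T) := hall
    _ ≤ ∑ i, p i * TV (μ i) m + (∑ i, p i * TV (μ i) m) / (2 * δ) := by
        gcongr
        rwa [le_div_iff₀ (by positivity), mul_comm]
    _ = _ := by ring

end TotalVariation

section Correlation

variable {ι κ : Type*} [Fintype ι] [Fintype κ]

/-- `ρ` bounds `E[F(I) G(K)]` over all standardized `F, G`, where `(I, K)` has joint law `j`. -/
def CorrBoundedBy (j : ι → κ → ℝ) (ρ : ℝ) : Prop :=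
  ∀ F : ι → ℝ, ∀ G : κ → ℝ,
    ∑ i, (∑ k, j i k) * F i = 0 → ∑ k, (∑ i, j i k) * G k = 0 →
    ∑ i, (∑ k, j i k) * F i ^ 2 = 1 → ∑ k, (∑ i, j i k) * G k ^ 2 = 1 →
    ∑ i, ∑ k, j i k * F i * G k ≤ ρ

lemma sq_sum_mul_mul_le {j : ι → κ → ℝ} (hj : ∀ i k, 0 ≤ j i k) (F : ι → ℝ) (G : κ → ℝ) :
    (∑ i, ∑ k, j i k * F i * G k) ^ 2
      ≤ (∑ i, (∑ k, j i k) * F i ^ 2) * ∑ k, (∑ i, j i k) * G k ^ 2 := by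
  have hcs := sum_sq_le_sum_mul_sum_of_sq_le_mul (univ : Finset (ι × κ))
    (r := fun ik => j ik.1 ik.2 * F ik.1 * G ik.2) (f := fun ik => j ik.1 ik.2 * F ik.1 ^ 2)
    (g := fun ik => j ik.1 ik.2 * G ik.2 ^ 2) (fun ik _ => by positivity [hj ik.1 ik.2])
    (fun ik _ => by positivity [hj ik.1 ik.2]) (fun ik _ => le_of_eq (by ring))
  simp only [← univ_product_univ, sum_product] at hcs
  rw [sum_comm (f := fun i k => j i k * G k ^ 2)] at hcs
  simpa only [sum_mul] using hcs

variable {j : ι → κ → ℝ} {ρ : ℝ}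

lemma CorrBoundedBy.sum_mul_mul_le (h : CorrBoundedBy j ρ) (hj : ∀ i k, 0 ≤ j i k)
    {F : ι → ℝ} {G : κ → ℝ} (hF : ∑ i, (∑ k, j i k) * F i = 0)
    (hG : ∑ k, (∑ i, j i k) * G k = 0) :
    ∑ i, ∑ k, j i k * F i * G k
      ≤ ρ * (√(∑ i, (∑ k, j i k) * F i ^ 2) * √(∑ k, (∑ i, j i k) * G k ^ 2)) := by
  set vF := ∑ i, (∑ k, j i k) * F i ^ 2
  set vG := ∑ k, (∑ i, j i k) * G k ^ 2
  have hvF : 0 ≤ vF := sum_nonneg fun i _ => mul_nonneg (sum_nonneg fun k _ => hj i k) (sq_nonneg _)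
  have hvG : 0 ≤ vG := sum_nonneg fun k _ => mul_nonneg (sum_nonneg fun i _ => hj i k) (sq_nonneg _)
  have hcs : ∑ i, ∑ k, j i k * F i * G k ≤ √(vF * vG) :=
    (le_abs_self _).trans (Real.abs_le_sqrt (sq_sum_mul_mul_le hj F G))
  rw [← Real.sqrt_mul hvF]
  rcases (mul_nonneg hvF hvG).eq_or_lt with hv | hv
  · rw [← hv, Real.sqrt_zero] at hcs ⊢
    rwa [mul_zero]
  have hvF' : 0 < vF := pos_of_mul_pos_left hv hvG
  have hvG' : 0 < vG := pos_of_mul_pos_right hv hvF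
  have hstd := h (fun i => F i / √vF) (fun k => G k / √vG)
    (by simp only [mul_div_assoc', ← sum_div, hF, zero_div])
    (by simp only [mul_div_assoc', ← sum_div, hG, zero_div])
    (by simp only [div_pow, mul_div_assoc', ← sum_div, Real.sq_sqrt hvF]; exact div_self hvF'.ne')
    (by simp only [div_pow, mul_div_assoc', ← sum_div, Real.sq_sqrt hvG]; exact div_self hvG'.ne')
  have hval : ∑ i, ∑ k, j i k * (F i / √vF) * (G k / √vG)
      = (∑ i, ∑ k, j i k * F i * G k) / √(vF * vG) := by
    rw [Real.sqrt_mul hvF, sum_div]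
    refine sum_congr rfl fun i _ => ?_
    rw [sum_div]
    exact sum_congr rfl fun k _ => by ring
  rwa [hval, div_le_iff₀ (Real.sqrt_pos.2 hv)] at hstd

/-- Testing against the indicator of `k₀` and the sign of the deviation from independence. -/
lemma CorrBoundedBy.sum_abs_sub_mul_le (h : CorrBoundedBy j ρ) (hj : ∀ i k, 0 ≤ j i k)
    (hρ : 0 ≤ ρ) (htot : ∑ i, ∑ k, j i k = 1) (k₀ : κ) :
    ∑ i, |j i k₀ - (∑ k, j i k) * ∑ i', j i' k₀|
      ≤ ρ * √((∑ i, j i k₀) * (1 - ∑ i, j i k₀)) := by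
  classical
  set a : ι → ℝ := fun i => ∑ k, j i k
  set b := ∑ i, j i k₀
  have ha0 : ∀ i, 0 ≤ a i := fun i => sum_nonneg fun k _ => hj i k
  have htot' : ∑ k, ∑ i, j i k = 1 := by rw [sum_comm]; exact htot
  set Δ : ι → ℝ := fun i => j i k₀ - a i * b
  have hΔ : ∑ i, Δ i = 0 := by
    simp only [Δ, sum_sub_distrib, ← sum_mul, htot, one_mul]
    exact sub_self b
  set f : ι → ℝ := fun i => (SignType.sign (Δ i) : ℝ)
  set μ := ∑ i, a i * f i
  set G : κ → ℝ := fun k => (if k = k₀ then 1 else 0) - b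
  have hF : ∑ i, a i * (f i - μ) = 0 := by
    simp only [mul_sub, sum_sub_distrib, ← sum_mul, htot, one_mul]; exact sub_self μ
  have hG : ∑ k, (∑ i, j i k) * G k = 0 := by
    simp only [G, mul_sub, mul_ite, mul_one, mul_zero, sum_sub_distrib, sum_ite_eq', mem_univ,
      if_true, ← sum_mul, htot', one_mul]
    exact sub_self b
  have hvF : ∑ i, a i * (f i - μ) ^ 2 ≤ 1 := by
    have hf : ∀ i, f i ^ 2 ≤ 1 := fun i => by
      rcases lt_trichotomy (Δ i) 0 with hi | hi | hi <;> simp [f, hi]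
    have e : ∀ i, a i * (f i - μ) ^ 2 = a i * f i ^ 2 - 2 * μ * (a i * f i) + μ ^ 2 * a i :=
      fun i => by ring
    have hle : ∑ i, a i * f i ^ 2 ≤ ∑ i, a i :=
      sum_le_sum fun i _ => mul_le_of_le_one_right (ha0 i) (hf i)
    simp only [e, sum_add_distrib, sum_sub_distrib, ← mul_sum]
    nlinarith [htot, sq_nonneg μ]
  have hvG : ∑ k, (∑ i, j i k) * G k ^ 2 = b * (1 - b) := by
    have e : ∀ k, (∑ i, j i k) * G k ^ 2
        = (if k = k₀ then ∑ i, j i k else 0) * (1 - 2 * b) + b ^ 2 * ∑ i, j i k :=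
      fun k => by simp only [G]; split_ifs <;> ring
    simp only [e, sum_add_distrib, ← sum_mul, ← mul_sum, sum_ite_eq', mem_univ, if_true, htot']
    ring
  have hval : ∑ i, ∑ k, j i k * (f i - μ) * G k = ∑ i, |Δ i| := by
    have e : ∀ i, ∑ k, j i k * (f i - μ) * G k = f i * Δ i - μ * Δ i := fun i => by
      simp only [G, Δ, mul_sub, mul_ite, mul_one, mul_zero, sum_sub_distrib, sum_ite_eq',
        mem_univ, if_true, ← sum_mul, a]
      ring
    simp only [e, sum_sub_distrib, ← mul_sum, hΔ, mul_zero, sub_zero, f, sign_mul_self]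
  calc ∑ i, |Δ i| = ∑ i, ∑ k, j i k * (f i - μ) * G k := hval.symm
    _ ≤ ρ * (√(∑ i, a i * (f i - μ) ^ 2) * √(∑ k, (∑ i, j i k) * G k ^ 2)) :=
      h.sum_mul_mul_le hj hF hG
    _ ≤ ρ * (1 * √(b * (1 - b))) := by
      rw [hvG]
      gcongr
      exact Real.sqrt_le_one.2 hvF
    _ = ρ * √(b * (1 - b)) := by rw [one_mul]

lemma CorrBoundedBy.transpose (h : CorrBoundedBy j ρ) : CorrBoundedBy (fun k i => j i k) ρ := by
  intro G F hG hF hG2 hF2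
  rw [sum_comm]
  convert h F G hF hG hF2 hG2 using 3
  ring

lemma sum_sqrt_mul_one_sub_le (p : κ → ℝ) (hp : ∀ k, 0 ≤ p k) (h1 : ∑ k, p k = 1) :
    ∑ k, √(p k * (1 - p k)) ≤ √(Fintype.card κ - 1) := by
  have hp1 : ∀ k, p k ≤ 1 := fun k => h1 ▸ single_le_sum (fun k _ => hp k) (mem_univ k)
  have hn : 1 ≤ (Fintype.card κ : ℝ) * ∑ k, p k ^ 2 := by
    simpa only [h1, one_pow, card_univ] using sq_sum_le_card_mul_sum_sq (s := univ) (f := p)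
  have hcs := sq_sum_le_card_mul_sum_sq (s := univ) (f := fun k => √(p k * (1 - p k)))
  simp only [Real.sq_sqrt (mul_nonneg (hp _) (sub_nonneg.2 (hp1 _))), card_univ] at hcs
  have hvar : ∑ k, p k * (1 - p k) = 1 - ∑ k, p k ^ 2 := by
    simp only [mul_sub, mul_one, sum_sub_distrib, h1, sq]
  refine (le_abs_self _).trans (Real.abs_le_sqrt ?_)
  nlinarith

lemma CorrBoundedBy.sum_sum_abs_sub_mul_le (h : CorrBoundedBy j ρ) (hj : ∀ i k, 0 ≤ j i k)
    (hρ : 0 ≤ ρ) (htot : ∑ i, ∑ k, j i k = 1) :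
    ∑ i, ∑ k, |j i k - (∑ k', j i k') * ∑ i', j i' k|
      ≤ ρ * √(min (Fintype.card ι : ℝ) (Fintype.card κ) - 1) := by
  have htot' : ∑ k, ∑ i, j i k = 1 := by rw [sum_comm]; exact htot
  have hcols : ∑ i, ∑ k, |j i k - (∑ k', j i k') * ∑ i', j i' k|
      ≤ ρ * √(Fintype.card κ - 1) := by
    rw [sum_comm]
    calc _ ≤ ∑ k, ρ * √((∑ i, j i k) * (1 - ∑ i, j i k)) :=
          sum_le_sum fun k _ => h.sum_abs_sub_mul_le hj hρ htot k
      _ ≤ ρ * √(Fintype.card κ - 1) := by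
          rw [← mul_sum]
          exact mul_le_mul_of_nonneg_left
            (sum_sqrt_mul_one_sub_le _ (fun k => sum_nonneg fun i _ => hj i k) htot') hρ
  have hrows : ∑ i, ∑ k, |j i k - (∑ k', j i k') * ∑ i', j i' k|
      ≤ ρ * √(Fintype.card ι - 1) :=
    calc _ ≤ ∑ i, ρ * √((∑ k, j i k) * (1 - ∑ k, j i k)) := sum_le_sum fun i _ => by
          simpa only [mul_comm (∑ k', j i k')] using
            h.transpose.sum_abs_sub_mul_le (fun k i => hj i k) hρ htot' i
      _ ≤ ρ * √(Fintype.card ι - 1) := by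
          rw [← mul_sum]
          exact mul_le_mul_of_nonneg_left
            (sum_sqrt_mul_one_sub_le _ (fun i => sum_nonneg fun k _ => hj i k) htot) hρ
  rcases le_total (Fintype.card ι : ℝ) (Fintype.card κ) with hle | hle
  · rwa [min_eq_left hle]
  · rwa [min_eq_right hle]

end Correlation

section FairLearning

variable (P : 𝒳 → 𝒴 → 𝒮 → ℝ) (Q : 𝒳 → 𝒮 → 𝒴 → ℝ)

lemma sum_margS (hP1 : ∑ x, ∑ y, ∑ s, P x y s = 1) : ∑ s, margS P s = 1 := by
  simp only [margS, margXS]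
  rw [sum_comm, ← hP1]
  exact sum_congr rfl fun x _ => sum_comm

omit [Fintype 𝒮] in
lemma margS_pos [Nonempty 𝒳] (hXS : ∀ x s, 0 < margXS P x s) (s : 𝒮) : 0 < margS P s :=
  sum_pos (fun x _ => hXS x s) univ_nonempty

omit [Fintype 𝒮] in
lemma jointYhatS_nonneg (hP0 : ∀ x y s, 0 ≤ P x y s) (hQ : IsRule Q) (y : 𝒴) (s : 𝒮) :
    0 ≤ jointYhatS P Q y s :=
  sum_nonneg fun x _ => mul_nonneg (sum_nonneg fun y _ => hP0 x y s) (hQ.1 x s y)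

omit [Fintype 𝒮] in
lemma sum_jointYhatS (hQ : IsRule Q) (s : 𝒮) : ∑ y, jointYhatS P Q y s = margS P s := by
  simp only [jointYhatS, margS]
  rw [sum_comm]
  simp only [← mul_sum, hQ.2, mul_one]

omit [Fintype 𝒮] in
lemma margS_mul_TV_condYhatS {s : 𝒮} (hs : 0 < margS P s) (q : 𝒴 → ℝ) :
    margS P s * TV (condYhatS P Q s) q
      = TV (fun y => jointYhatS P Q y s) (fun y => margS P s * q y) := by
  simp only [mul_TV _ _ hs.le, condYhatS, mul_div_cancel₀ _ hs.ne']

lemma sum_jointYhatS_mul_mul_le_one (hP0 : ∀ x y s, 0 ≤ P x y s) (hQ : IsRule Q)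
    {f : 𝒴 → ℝ} {g : 𝒮 → ℝ}
    (hf : ∑ y, margYhat P Q y * f y ^ 2 = 1) (hg : ∑ s, margS P s * g s ^ 2 = 1) :
    ∑ y, ∑ s, jointYhatS P Q y s * f y * g s ≤ 1 := by
  have hcs := sq_sum_mul_mul_le (jointYhatS_nonneg P Q hP0 hQ) f g
  simp only [sum_jointYhatS P Q hQ] at hcs
  rw [show ∑ y, (∑ s, jointYhatS P Q y s) * f y ^ 2 = 1 from hf, hg, one_mul] at hcs
  exact (le_abs_self _).trans ((sq_le_one_iff_abs_le_one _).1 hcs)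

lemma le_maxCorr (hP0 : ∀ x y s, 0 ≤ P x y s) (hQ : IsRule Q) {f : 𝒴 → ℝ} {g : 𝒮 → ℝ}
    (hf : ∑ y, margYhat P Q y * f y = 0) (hg : ∑ s, margS P s * g s = 0)
    (hf2 : ∑ y, margYhat P Q y * f y ^ 2 = 1) (hg2 : ∑ s, margS P s * g s ^ 2 = 1) :
    ∑ y, ∑ s, jointYhatS P Q y s * f y * g s ≤ maxCorr P Q :=
  le_csSup ⟨1, by
      rintro _ ⟨f, g, -, -, hf2, hg2, rfl⟩
      exact sum_jointYhatS_mul_mul_le_one P Q hP0 hQ hf2 hg2⟩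
    ⟨f, g, hf, hg, hf2, hg2, rfl⟩

lemma maxCorr_le_one (hP0 : ∀ x y s, 0 ≤ P x y s) (hQ : IsRule Q) : maxCorr P Q ≤ 1 :=
  Real.sSup_le (by
      rintro _ ⟨f, g, -, -, hf2, hg2, rfl⟩
      exact sum_jointYhatS_mul_mul_le_one P Q hP0 hQ hf2 hg2) zero_le_one

lemma maxCorr_nonneg (hP0 : ∀ x y s, 0 ≤ P x y s) (hQ : IsRule Q) : 0 ≤ maxCorr P Q := by
  by_cases hstd : ∃ f : 𝒴 → ℝ, ∃ g : 𝒮 → ℝ,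
      (∑ y, margYhat P Q y * f y = 0) ∧ (∑ s, margS P s * g s = 0) ∧
      (∑ y, margYhat P Q y * f y ^ 2 = 1) ∧ (∑ s, margS P s * g s ^ 2 = 1)
  · obtain ⟨f, g, hf, hg, hf2, hg2⟩ := hstd
    have hpos := le_maxCorr P Q hP0 hQ hf hg hf2 hg2
    have hneg := le_maxCorr P Q hP0 hQ (f := -f) (by simp [hf]) hg (by simpa using hf2) hg2
    simp only [Pi.neg_apply, mul_neg, neg_mul, sum_neg_distrib] at hneg
    linarith
  · exact Real.sSup_nonneg (by
      rintro _ ⟨f, g, hf, hg, hf2, hg2, rfl⟩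
      exact (hstd ⟨f, g, hf, hg, hf2, hg2⟩).elim)

lemma corrBoundedBy_maxCorr (hP0 : ∀ x y s, 0 ≤ P x y s) (hQ : IsRule Q) :
    CorrBoundedBy (jointYhatS P Q) (maxCorr P Q) := by
  intro f g hf hg hf2 hg2
  simp only [sum_jointYhatS P Q hQ] at hg hg2
  exact le_maxCorr P Q hP0 hQ hf hg hf2 hg2

lemma maxCorr_eq_zero_of_jointYhatS_eq_mul (hP0 : ∀ x y s, 0 ≤ P x y s) (hQ : IsRule Q)
    (q : 𝒴 → ℝ) (hind : ∀ y s, jointYhatS P Q y s = margS P s * q y) : maxCorr P Q = 0 := by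
  refine le_antisymm (Real.sSup_nonpos ?_) (maxCorr_nonneg P Q hP0 hQ)
  rintro _ ⟨f, g, -, hg, -, -, rfl⟩
  have e : ∀ y, ∑ s, jointYhatS P Q y s * f y * g s = q y * f y * ∑ s, margS P s * g s :=
    fun y => by rw [mul_sum]; exact sum_congr rfl fun s _ => by rw [hind]; ring
  simp only [e, hg, mul_zero, sum_const_zero, le_refl]

omit [Fintype 𝒮] in
lemma condYXS_eq_condRatio_mul {x : 𝒳} {y : 𝒴} {s : 𝒮} (hys : margYS P y s ≠ 0)
    (hs : margS P s ≠ 0) : condYXS P x s y = condRatio P x y s * condYS P s y := by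
  simp only [condYXS, condRatio, condYS]
  field_simp

omit [Fintype 𝒮] in
lemma sum_margXS_mul_condRatio {y : 𝒴} {s : 𝒮} (hXS : ∀ x, margXS P x s ≠ 0)
    (hys : margYS P y s ≠ 0) : ∑ x, margXS P x s * condRatio P x y s = margS P s := by
  have e : ∀ x, margXS P x s * condRatio P x y s = P x y s * (margS P s / margYS P y s) :=
    fun x => by simp only [condRatio]; field_simp [hXS x]
  rw [sum_congr rfl fun x _ => e x, ← sum_mul, div_eq_mul_inv, ← mul_assoc,
    show ∑ x, P x y s = margYS P y s from rfl, mul_comm, ← mul_assoc, inv_mul_cancel₀ hys, one_mul]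

omit [Fintype 𝒮] in
lemma condRatio_nonneg (hP0 : ∀ x y s, 0 ≤ P x y s) (x : 𝒳) (y : 𝒴) (s : 𝒮) :
    0 ≤ condRatio P x y s := by
  have hm : ∀ x, 0 ≤ margXS P x s := fun x => sum_nonneg fun y _ => hP0 x y s
  exact div_nonneg (div_nonneg (hP0 x y s) (sum_nonneg fun x _ => hP0 x y s))
    (div_nonneg (hm x) (sum_nonneg fun x _ => hm x))

def bayesRuleAt (s₀ : 𝒮) : 𝒳 → 𝒮 → 𝒴 → ℝ := fun x _ => condYXS P x s₀

omit [Fintype 𝒳] [Fintype 𝒮] in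
lemma isRule_bayesRuleAt (hP0 : ∀ x y s, 0 ≤ P x y s) {s₀ : 𝒮}
    (hXS : ∀ x, 0 < margXS P x s₀) : IsRule (bayesRuleAt P s₀) :=
  ⟨fun x _ y => div_nonneg (hP0 x y s₀) (hXS x).le,
    fun x _ => by simp only [bayesRuleAt, condYXS, ← sum_div]; exact div_self (hXS x).ne'⟩

omit [Fintype 𝒮] in
lemma jointYhatS_bayesRuleAt {s₀ : 𝒮} (hXS : ∀ x s, 0 < margXS P x s)
    (hYS : ∀ y s, 0 < margYS P y s) (hS₀ : 0 < margS P s₀)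
    (hratio : ∀ x y s, condRatio P x y s = condRatio P x y s₀) (y : 𝒴) (s : 𝒮) :
    jointYhatS P (bayesRuleAt P s₀) y s = margS P s * condYS P s₀ y := by
  simp only [jointYhatS, bayesRuleAt, condYXS_eq_condRatio_mul P (hYS y s₀).ne' hS₀.ne',
    ← hratio _ y s, ← mul_assoc, ← sum_mul]
  rw [sum_margXS_mul_condRatio P (fun x => (hXS x s).ne') (hYS y s).ne']

lemma objective_bayesRuleAt (hP0 : ∀ x y s, 0 ≤ P x y s) {s₀ : 𝒮}
    (hXS : ∀ x s, 0 < margXS P x s) (hYS : ∀ y s, 0 < margYS P y s) (hS : ∀ s, 0 < margS P s)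
    (hratio : ∀ x y s, condRatio P x y s = condRatio P x y s₀) :
    objective P (bayesRuleAt P s₀) = ∑ s, margS P s * TV (condYS P s₀) (condYS P s) := by
  unfold objective
  rw [sum_comm]
  refine sum_congr rfl fun s _ => ?_
  have e : ∀ x y, margXS P x s * |condYXS P x s₀ y - condYXS P x s y|
      = margXS P x s * condRatio P x y s * |condYS P s₀ y - condYS P s y| := fun x y => by
    rw [condYXS_eq_condRatio_mul P (hYS y s₀).ne' (hS s₀).ne', ← hratio x y s,
      condYXS_eq_condRatio_mul P (hYS y s).ne' (hS s).ne', ← mul_sub, abs_mul,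
      abs_of_nonneg (condRatio_nonneg P hP0 x y s), mul_assoc]
  simp only [bayesRuleAt, TV, mul_left_comm (margXS P _ s), mul_sum, e]
  rw [sum_comm]
  simp only [← mul_sum, ← sum_mul,
    sum_margXS_mul_condRatio P (fun x => (hXS x s).ne') (hYS _ s).ne']
  ring

lemma sum_margS_mul_TV_le_objective (hXS : ∀ x s, 0 < margXS P x s)
    (hS : ∀ s, 0 < margS P s) :
    ∑ s, margS P s * TV (condYhatS P Q s) (condYS P s) ≤ objective P Q := by
  unfold objective
  rw [sum_comm]
  refine sum_le_sum fun s _ => ?_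
  have hmix : (fun y => margS P s * condYS P s y)
      = fun y => ∑ x, margXS P x s * condYXS P x s y := by
    funext y
    simp only [condYS, condYXS, mul_div_cancel₀ _ (hS s).ne', mul_div_cancel₀ _ (hXS _ s).ne']
    rfl
  rw [margS_mul_TV_condYhatS P Q (hS s), hmix]
  exact TV_sum_le _ (fun x => (hXS x s).le) (fun x => Q x s) _

lemma sum_margS_mul_TV_margYhat_le (hP0 : ∀ x y s, 0 ≤ P x y s)
    (hP1 : ∑ x, ∑ y, ∑ s, P x y s = 1) (hQ : IsRule Q) (hS : ∀ s, 0 < margS P s) :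
    ∑ s, margS P s * TV (condYhatS P Q s) (margYhat P Q)
      ≤ 1 / 2 * (maxCorr P Q * √(min (Fintype.card 𝒮 : ℝ) (Fintype.card 𝒴) - 1)) := by
  have htot : ∑ y, ∑ s, jointYhatS P Q y s = 1 := by
    rw [sum_comm]
    simp only [sum_jointYhatS P Q hQ, sum_margS P hP1]
  have hbound := (corrBoundedBy_maxCorr P Q hP0 hQ).sum_sum_abs_sub_mul_le
    (jointYhatS_nonneg P Q hP0 hQ) (maxCorr_nonneg P Q hP0 hQ) htot
  simp only [sum_jointYhatS P Q hQ, min_comm (Fintype.card 𝒴 : ℝ)] at hbound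
  calc _ = 1 / 2 * ∑ y, ∑ s, |jointYhatS P Q y s - margYhat P Q y * margS P s| := by
        rw [sum_congr rfl fun s _ => margS_mul_TV_condYhatS P Q (hS s) _, sum_comm]
        simp only [TV, ← mul_sum, mul_comm (margS P _)]
    _ ≤ _ := by gcongr; exact hbound

end FairLearning

/-- **Theorem 3 (maximal correlation case).** In the generalized fair learning problem, if
the ratio `P(x|y,s)/P(x|s)` does not depend on `s` and `P_S(s_max) = 1/2 + δ` with
`δ > 0`, then with `r = min{|𝒮|, |𝒴|} - 1` and `u(t) = max{t, √t}`, any optimal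
solution among rules with `ρ_m(Ŷ, S) ≤ ε` satisfies
`E_{s∼P_S}[TV(P_{Ŷ|S=s}, P_{Y|S=s_max})] ≤ (1/2 + 1/(4δ)) u(rε)`. -/
theorem generalized_maxcorr_fair_optimal_inductive_bias
    (P : 𝒳 → 𝒴 → 𝒮 → ℝ)
    (hP0 : ∀ x y s, 0 ≤ P x y s)
    (hP1 : ∑ x, ∑ y, ∑ s, P x y s = 1)
    (hXS : ∀ x s, 0 < margXS P x s)
    (hYS : ∀ y s, 0 < margYS P y s)
    (φ : 𝒳 → 𝒴 → ℝ)
    (hφ : ∀ x y s, condRatio P x y s = φ x y)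
    (smax : 𝒮) (δ : ℝ) (hδ : 0 < δ) (hsmax : margS P smax = 1 / 2 + δ)
    (ε : ℝ)
    (Q : 𝒳 → 𝒮 → 𝒴 → ℝ) (hQ : IsRule Q)
    (hfair : maxCorr P Q ≤ ε)
    (hopt : ∀ Q' : 𝒳 → 𝒮 → 𝒴 → ℝ, IsRule Q' → maxCorr P Q' ≤ ε →
      objective P Q ≤ objective P Q') :
    ∑ s, margS P s * TV (condYhatS P Q s) (condYS P smax)
      ≤ (1 / 2 + 1 / (4 * δ)) *
        max (((min (Fintype.card 𝒮) (Fintype.card 𝒴) : ℝ) - 1) * ε)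
          (Real.sqrt (((min (Fintype.card 𝒮) (Fintype.card 𝒴) : ℝ) - 1) * ε)) := by
  have : Nonempty 𝒳 := univ_nonempty_iff.1 (nonempty_of_sum_ne_zero (hP1 ▸ one_ne_zero))
  have hS := margS_pos P hXS
  have hratio x y s : condRatio P x y s = condRatio P x y smax :=
    (hφ x y s).trans (hφ x y smax).symm
  have hbayes := isRule_bayesRuleAt P hP0 fun x => hXS x smax
  have hbayes_fair : maxCorr P (bayesRuleAt P smax) ≤ ε := by
    rw [maxCorr_eq_zero_of_jointYhatS_eq_mul P _ hP0 hbayes _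
      (jointYhatS_bayesRuleAt P hXS hYS (hS smax) hratio)]
    exact (maxCorr_nonneg P Q hP0 hQ).trans hfair
  have hcmp : ∑ s, margS P s * TV (condYhatS P Q s) (condYS P s)
      ≤ ∑ s, margS P s * TV (condYS P smax) (condYS P s) :=
    (sum_margS_mul_TV_le_objective P Q hXS hS).trans
      ((hopt _ hbayes hbayes_fair).trans_eq (objective_bayesRuleAt P hP0 hXS hYS hS hratio))
  calc _ ≤ (1 + 1 / (2 * δ)) * ∑ s, margS P s * TV (condYhatS P Q s) (margYhat P Q) :=
        sum_mul_TV_le_of_majority _ (fun s => (hS s).le) (sum_margS P hP1) hδ hsmax _ _ _ hcmp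
    _ ≤ (1 + 1 / (2 * δ)) * (1 / 2 * max ((min (Fintype.card 𝒮 : ℝ) (Fintype.card 𝒴) - 1) * ε)
          √((min (Fintype.card 𝒮 : ℝ) (Fintype.card 𝒴) - 1) * ε)) := by
        gcongr
        refine (sum_margS_mul_TV_margYhat_le P Q hP0 hP1 hQ hS).trans ?_
        gcongr
        exact mul_sqrt_le_max_mul_sqrt (maxCorr_nonneg P Q hP0 hQ) (maxCorr_le_one P Q hP0 hQ) hfair
    _ = _ := by field_simp; ring
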